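/- Let X be a real- or complex-valued random variable, and let β, σ, B > 0 be such that for all s ≥ 0 one has the tail bound ℙ(|X| > s) ≤ β exp( − s² / (σ² + B s) ). Then for every p ≥ 1 the p-th moment of X is bounded by 𝔼(|X|^p)^{1/p} ≤ β^{1/p} √p σ + 2 β^{1/p} p B. -/

import Mathlib

open MeasureTheory Real ENNReal Set

/-!
Let `r ≥ 0` solve `B r² + σ r = ‖X‖` and put `U = r²`, so that `‖X‖ = σ √U + B U`. At
`s = σ √u + B u` one has `s² / (σ² + B s) ≥ u`, so the tail hypothesis turns into the exponential
tail `ℙ(U > u) ≤ β e^{-u}`. The layer cake formula then gives `𝔼 U^q ≤ β Γ(q + 1) ≤ β (2q)^q` for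
`q ≥ 1/2`, and Minkowski's inequality in `L^p` combines the cases `q = p/2` (for `√U`) and `q = p`
(for `U`).
-/

namespace Real

lemma Gamma_le_one_of_mem_Icc {x : ℝ} (hx : x ∈ Icc 1 2) : Gamma x ≤ 1 := by
  simpa [Gamma_two] using
    convexOn_Gamma.le_max_of_mem_Icc (by norm_num : (1 : ℝ) ∈ Ioi 0) (by norm_num) hx

lemma rpow_le_rpow_mul_exp {x c q : ℝ} (hx : 0 ≤ x) (hc : 0 < c) (hq : 0 ≤ q) :
    x ^ q ≤ c ^ q * exp (q * (x / c - 1)) := by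
  calc x ^ q = c ^ q * (x / c) ^ q := by
        rw [← mul_rpow hc.le (by positivity), mul_div_cancel₀ _ hc.ne']
    _ ≤ c ^ q * exp (x / c - 1) ^ q := by
        gcongr
        linarith [add_one_le_exp (x / c - 1)]
    _ = c ^ q * exp (q * (x / c - 1)) := by rw [← exp_mul, mul_comm (x / c - 1)]

lemma Gamma_add_one_le_two_mul_exp_neg_mul_rpow {q : ℝ} (hq : 0 < q) :
    Gamma (q + 1) ≤ 2 * exp (-q) * (2 * q) ^ q := by
  have hbound : ∀ x ∈ Ioi (0 : ℝ),
      exp (-x) * x ^ (q + 1 - 1) ≤ (2 * q) ^ q * exp (-q) * exp (-(1 / 2) * x) := by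
    intro x hx
    calc exp (-x) * x ^ (q + 1 - 1)
        ≤ exp (-x) * ((2 * q) ^ q * exp (q * (x / (2 * q) - 1))) := by
          rw [add_sub_cancel_right]
          gcongr
          -- `x ↦ x^q e^{-x/2}` is maximal at `x = 2q`
          exact rpow_le_rpow_mul_exp (le_of_lt hx) (by positivity) hq.le
      _ = (2 * q) ^ q * exp (-q) * exp (-(1 / 2) * x) := by
          rw [mul_left_comm, mul_assoc, ← exp_add, ← exp_add]
          field_simp
          ring_nf
  have hexp : ∫ x in Ioi (0 : ℝ), exp (-(1 / 2) * x) = 2 := by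
    rw [integral_exp_mul_Ioi (by norm_num)]; norm_num
  calc Gamma (q + 1) = ∫ x in Ioi (0 : ℝ), exp (-x) * x ^ (q + 1 - 1) :=
        Gamma_eq_integral (by linarith)
    _ ≤ ∫ x in Ioi (0 : ℝ), (2 * q) ^ q * exp (-q) * exp (-(1 / 2) * x) :=
        setIntegral_mono_on (GammaIntegral_convergent (by linarith))
          ((exp_neg_integrableOn_Ioi 0 (by norm_num)).const_mul _) measurableSet_Ioi hbound
    _ = 2 * exp (-q) * (2 * q) ^ q := by rw [integral_const_mul, hexp]; ring

lemma Gamma_add_one_le_two_mul_rpow {q : ℝ} (hq : 1 / 2 ≤ q) : Gamma (q + 1) ≤ (2 * q) ^ q := by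
  rcases le_total q 1 with hq1 | hq1
  · calc Gamma (q + 1) ≤ 1 := Gamma_le_one_of_mem_Icc ⟨by linarith, by linarith⟩
      _ ≤ (2 * q) ^ q := one_le_rpow (by linarith) (by linarith)
  · have htwo : 2 * exp (-q) ≤ 1 := by
      rw [exp_neg, ← div_eq_mul_inv, div_le_one (exp_pos q)]
      linarith [add_one_le_exp q]
    calc Gamma (q + 1) ≤ 2 * exp (-q) * (2 * q) ^ q :=
          Gamma_add_one_le_two_mul_exp_neg_mul_rpow (by linarith)
      _ ≤ (2 * q) ^ q := mul_le_of_le_one_left (by positivity) htwo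

end Real

section Moments

variable {Ω : Type*} [MeasurableSpace Ω] {μ : Measure Ω} {U : Ω → ℝ} {β : ℝ}

lemma lintegral_rpow_le_of_meas_lt_le_exp (hU0 : 0 ≤ᵐ[μ] U) (hU : AEMeasurable U μ)
    (hβ : 0 ≤ β) (htail : ∀ t > 0, μ {ω | t < U ω} ≤ ENNReal.ofReal (β * exp (-t)))
    {q : ℝ} (hq : 0 < q) :
    ∫⁻ ω, ENNReal.ofReal (U ω ^ q) ∂μ ≤ ENNReal.ofReal (β * Gamma (q + 1)) := by
  have hint : IntegrableOn (fun t ↦ β * (exp (-t) * t ^ (q - 1))) (Ioi 0) :=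
    (GammaIntegral_convergent hq).const_mul β
  rw [lintegral_rpow_eq_lintegral_meas_lt_mul μ hU0 hU hq]
  calc ENNReal.ofReal q * ∫⁻ t in Ioi (0 : ℝ), μ {ω | t < U ω} * ENNReal.ofReal (t ^ (q - 1))
      ≤ ENNReal.ofReal q *
          ∫⁻ t in Ioi (0 : ℝ), ENNReal.ofReal (β * (exp (-t) * t ^ (q - 1))) := by
        refine mul_le_mul_right
          (setLIntegral_mono' measurableSet_Ioi fun t (ht : 0 < t) ↦ ?_) _
        rw [← mul_assoc, ENNReal.ofReal_mul (by positivity)]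
        gcongr
        exact htail t ht
    _ = ENNReal.ofReal q * ENNReal.ofReal (β * Gamma q) := by
        rw [← ofReal_integral_eq_lintegral_ofReal hint, integral_const_mul,
          ← Gamma_eq_integral hq]
        filter_upwards [self_mem_ae_restrict measurableSet_Ioi] with t (ht : 0 < t)
        positivity
    _ = ENNReal.ofReal (β * Gamma (q + 1)) := by
        rw [← ENNReal.ofReal_mul hq.le, Gamma_add_one hq.ne']
        ring_nf

lemma eLpNorm'_rpow_le_of_meas_lt_le_exp (hU0 : 0 ≤ᵐ[μ] U) (hU : AEMeasurable U μ)
    (hβ : 0 ≤ β) (htail : ∀ t > 0, μ {ω | t < U ω} ≤ ENNReal.ofReal (β * exp (-t)))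
    {p r : ℝ} (hp : 0 < p) (hrp : 1 / 2 ≤ r * p) :
    eLpNorm' (fun ω ↦ U ω ^ r) p μ ≤ ENNReal.ofReal (β ^ (1 / p) * (2 * r * p) ^ r) := by
  have hmoment : ∫⁻ ω, ‖U ω ^ r‖ₑ ^ p ∂μ ≤ ENNReal.ofReal (β * (2 * (r * p)) ^ (r * p)) := by
    calc ∫⁻ ω, ‖U ω ^ r‖ₑ ^ p ∂μ = ∫⁻ ω, ENNReal.ofReal (U ω ^ (r * p)) ∂μ := by
          refine lintegral_congr_ae ?_
          filter_upwards [hU0] with ω (hω : 0 ≤ U ω)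
          rw [Real.enorm_eq_ofReal (rpow_nonneg hω r),
            ENNReal.ofReal_rpow_of_nonneg (rpow_nonneg hω r) hp.le, ← rpow_mul hω]
      _ ≤ ENNReal.ofReal (β * Gamma (r * p + 1)) :=
          lintegral_rpow_le_of_meas_lt_le_exp hU0 hU hβ htail (by linarith)
      _ ≤ ENNReal.ofReal (β * (2 * (r * p)) ^ (r * p)) := by
          gcongr
          exact Gamma_add_one_le_two_mul_rpow hrp
  have hrp0 : 0 ≤ 2 * (r * p) := by linarith
  calc eLpNorm' (fun ω ↦ U ω ^ r) p μ
      ≤ ENNReal.ofReal (β * (2 * (r * p)) ^ (r * p)) ^ (1 / p) := by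
        rw [eLpNorm'_eq_lintegral_enorm]
        gcongr
    _ = ENNReal.ofReal (β ^ (1 / p) * (2 * r * p) ^ r) := by
        rw [ENNReal.ofReal_rpow_of_nonneg (by positivity) (by positivity),
          mul_rpow hβ (by positivity), ← rpow_mul hrp0, mul_one_div,
          mul_div_cancel_right₀ _ hp.ne', mul_assoc]

end Moments

/-- The nonnegative root `r` of `B r² + σ r = s` (for `B > 0`, `s ≥ 0`). -/
noncomputable def posRoot (σ B s : ℝ) : ℝ := (√(σ ^ 2 + 4 * B * s) - σ) / (2 * B)

lemma posRoot_nonneg {σ B s : ℝ} (hB : 0 < B) (hs : 0 ≤ s) : 0 ≤ posRoot σ B s := by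
  have : σ ≤ √(σ ^ 2 + 4 * B * s) := le_sqrt_of_sq_le (by nlinarith)
  exact div_nonneg (by linarith) (by positivity)

lemma mul_posRoot_add_mul_sq {σ B s : ℝ} (hB : B ≠ 0) (hs : 0 ≤ σ ^ 2 + 4 * B * s) :
    σ * posRoot σ B s + B * posRoot σ B s ^ 2 = s := by
  have hsq := sq_sqrt hs
  unfold posRoot
  field_simp
  linear_combination hsq

lemma meas_lt_posRoot_sq_le_exp {Ω E : Type*} [MeasurableSpace Ω] [NormedAddCommGroup E]
    {μ : Measure Ω} {X : Ω → E} {β σ B : ℝ} (hβ : 0 ≤ β) (hσ : 0 < σ) (hB : 0 < B)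
    (htail : ∀ s : ℝ, 0 ≤ s →
      μ {ω | s < ‖X ω‖} ≤ ENNReal.ofReal (β * exp (-(s ^ 2) / (σ ^ 2 + B * s))))
    {u : ℝ} (hu : 0 ≤ u) :
    μ {ω | u < posRoot σ B ‖X ω‖ ^ 2} ≤ ENNReal.ofReal (β * exp (-u)) := by
  set t := √u
  have ht : 0 ≤ t := sqrt_nonneg u
  have htu : t ^ 2 = u := sq_sqrt hu
  have hsub : {ω | u < posRoot σ B ‖X ω‖ ^ 2} ⊆ {ω | σ * t + B * t ^ 2 < ‖X ω‖} := by
    intro ω (hω : u < _)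
    have hr := posRoot_nonneg (σ := σ) hB (norm_nonneg (X ω))
    have hX := mul_posRoot_add_mul_sq (σ := σ) (s := ‖X ω‖) hB.ne' (by positivity)
    have : t < posRoot σ B ‖X ω‖ := by nlinarith
    show σ * t + B * t ^ 2 < ‖X ω‖
    nlinarith
  -- with `s = σ t + B t²`, `s² - t² (σ² + B s) = σ B t³ ≥ 0`
  have hexp : -((σ * t + B * t ^ 2) ^ 2) / (σ ^ 2 + B * (σ * t + B * t ^ 2)) ≤ -u := by
    rw [neg_div, neg_le_neg_iff, le_div_iff₀ (by positivity), ← htu]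
    nlinarith [mul_nonneg (mul_nonneg hσ.le hB.le) (pow_nonneg ht 3)]
  calc μ {ω | u < posRoot σ B ‖X ω‖ ^ 2}
      ≤ μ {ω | σ * t + B * t ^ 2 < ‖X ω‖} := measure_mono hsub
    _ ≤ ENNReal.ofReal (β * exp (-u)) := (htail _ (by positivity)).trans <|
        ENNReal.ofReal_le_ofReal <| mul_le_mul_of_nonneg_left (exp_le_exp.2 hexp) hβ

theorem tails_to_moments {Ω : Type*} [MeasurableSpace Ω] (μ : Measure Ω)
    (X : Ω → ℂ) (hX : AEMeasurable X μ)
    (β σ B : ℝ) (hβ : 0 < β) (hσ : 0 < σ) (hB : 0 < B)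
    (htail : ∀ s : ℝ, 0 ≤ s →
      μ {ω | s < ‖X ω‖} ≤ ENNReal.ofReal (β * Real.exp (-(s ^ 2) / (σ ^ 2 + B * s))))
    (p : ℝ) (hp : 1 ≤ p) :
    (∫⁻ ω, (‖X ω‖₊ : ℝ≥0∞) ^ p ∂μ) ^ (1 / p) ≤
      ENNReal.ofReal (β ^ (1 / p) * Real.sqrt p * σ + 2 * β ^ (1 / p) * p * B) := by
  have hp0 : 0 < p := by linarith
  set U : Ω → ℝ := fun ω ↦ posRoot σ B ‖X ω‖ ^ 2
  have hU : AEMeasurable U μ := by unfold U posRoot; fun_prop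
  have hU0 : 0 ≤ᵐ[μ] U := ae_of_all _ fun ω ↦ sq_nonneg _
  have hU_tail : ∀ u > 0, μ {ω | u < U ω} ≤ ENNReal.ofReal (β * exp (-u)) :=
    fun u hu ↦ meas_lt_posRoot_sq_le_exp hβ.le hσ hB htail hu.le
  have hX_eq : ∀ ω, ‖X ω‖ = ‖σ * U ω ^ (1 / 2 : ℝ) + B * U ω‖ := fun ω ↦ by
    rw [← sqrt_eq_rpow, sqrt_sq (posRoot_nonneg hB (norm_nonneg _)),
      mul_posRoot_add_mul_sq hB.ne' (by positivity), norm_norm]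
  calc eLpNorm' X p μ = eLpNorm' (σ • (fun ω ↦ U ω ^ (1 / 2 : ℝ)) + B • U) p μ :=
        eLpNorm'_congr_norm_ae (ae_of_all _ hX_eq)
    _ ≤ ‖σ‖ₑ * eLpNorm' (fun ω ↦ U ω ^ (1 / 2 : ℝ)) p μ + ‖B‖ₑ * eLpNorm' U p μ := by
        rw [← eLpNorm'_const_smul _ hp0, ← eLpNorm'_const_smul _ hp0]
        exact eLpNorm'_add_le (by fun_prop) (by fun_prop) hp
    _ ≤ ‖σ‖ₑ * ENNReal.ofReal (β ^ (1 / p) * (2 * (1 / 2) * p) ^ (1 / 2 : ℝ)) +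
          ‖B‖ₑ * ENNReal.ofReal (β ^ (1 / p) * (2 * 1 * p) ^ (1 : ℝ)) := by
        gcongr
        · exact eLpNorm'_rpow_le_of_meas_lt_le_exp (r := 1 / 2) hU0 hU hβ.le hU_tail hp0
            (by linarith)
        · simpa using eLpNorm'_rpow_le_of_meas_lt_le_exp (r := 1) hU0 hU hβ.le hU_tail hp0
            (by linarith)
    _ = ENNReal.ofReal (β ^ (1 / p) * √p * σ + 2 * β ^ (1 / p) * p * B) := by
        rw [enorm_eq_ofReal hσ.le, enorm_eq_ofReal hB.le, ← ENNReal.ofReal_mul hσ.le,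
          ← ENNReal.ofReal_mul hB.le, ← ENNReal.ofReal_add (by positivity) (by positivity),
          sqrt_eq_rpow, Real.rpow_one]
        ring_nf
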